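/- If f is a flow such that the residual graph G_f contains no augmenting path from s to t, then letting A be the set of vertices reachable from s via non-saturated residual edges and B = V \ A, the pair (A, B) is an s-t cut whose capacity equals |f|; consequently f is a maximum flow and (A, B) is a minimum cut. -/
import Mathlib


open Classical

/-- For any flow `g` and any cut `S` (with `s ∈ S`, `t ∉ S`), the value of the flow
equals the net flow across the cut. -/
lemma flow_value_cut {V : Type*} [Fintype V] [DecidableEq V]
    (g : V → V → ℝ) (s t : V)
    (hcons : ∀ v, v ≠ s → v ≠ t → ∑ u, g v u = ∑ u, g u v)
    (S : Finset V) (hs : s ∈ S) (ht : t ∉ S) :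
    (∑ u, g s u) - (∑ u, g u s)
      = (∑ u ∈ S, ∑ v ∈ Sᶜ, g u v) - (∑ u ∈ Sᶜ, ∑ v ∈ S, g u v) := by
  have key : ∑ v ∈ S, ((∑ u, g v u) - (∑ u, g u v))
      = (∑ u, g s u) - (∑ u, g u s) := by
    rw [Finset.sum_eq_single s]
    · intro v hv hvs
      have hvt : v ≠ t := by rintro rfl; exact ht hv
      rw [hcons v hvs hvt]; ring
    · intro h; exact absurd hs h
  rw [← key, Finset.sum_sub_distrib]
  have h1 : ∑ v ∈ S, ∑ u, g v u
      = (∑ v ∈ S, ∑ u ∈ S, g v u) + ∑ v ∈ S, ∑ u ∈ Sᶜ, g v u := by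
    rw [← Finset.sum_add_distrib]
    congr 1; ext v
    exact (Finset.sum_add_sum_compl S _).symm
  have h2 : ∑ v ∈ S, ∑ u, g u v
      = (∑ v ∈ S, ∑ u ∈ S, g u v) + ∑ v ∈ S, ∑ u ∈ Sᶜ, g u v := by
    rw [← Finset.sum_add_distrib]
    congr 1; ext v
    exact (Finset.sum_add_sum_compl S _).symm
  have h3 : ∑ v ∈ S, ∑ u ∈ S, g v u = ∑ v ∈ S, ∑ u ∈ S, g u v :=
    Finset.sum_comm
  have h4 : ∑ v ∈ S, ∑ u ∈ Sᶜ, g u v = ∑ u ∈ Sᶜ, ∑ v ∈ S, g u v :=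
    Finset.sum_comm
  rw [h1, h2, h3, h4]
  ring

/-- If the residual graph of a flow f contains no augmenting path from s to t, then
the set A of vertices reachable from s via non-saturated residual edges gives an
s-t cut (A, V \ A) whose capacity equals the value of f; consequently f is a
maximum flow and (A, V \ A) is a minimum cut. -/
theorem stmt_4 {V : Type*} [Fintype V] [DecidableEq V]
    (c f : V → V → ℝ) (s t : V) (hst : s ≠ t)
    (hc : ∀ u v, 0 ≤ c u v)
    (hcap : ∀ u v, 0 ≤ f u v ∧ f u v ≤ c u v)
    (hcons : ∀ v, v ≠ s → v ≠ t → ∑ u, f v u = ∑ u, f u v)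
    (cf : V → V → ℝ)
    (hcf : ∀ u v, cf u v = (c u v - f u v) + f v u)
    (hnoaug : ¬ Relation.ReflTransGen (fun u v => 0 < cf u v) s t)
    (A : Set V)
    (hA : A = {v | Relation.ReflTransGen (fun u v => 0 < cf u v) s v}) :
    s ∈ A ∧ t ∉ A ∧
    ((∑ u, f s u) - (∑ u, f u s)
      = ∑ u ∈ Finset.univ.filter (· ∈ A), ∑ v ∈ Finset.univ.filter (· ∉ A), c u v) ∧
    (∀ g : V → V → ℝ,
      (∀ u v, 0 ≤ g u v ∧ g u v ≤ c u v) →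
      (∀ v, v ≠ s → v ≠ t → ∑ u, g v u = ∑ u, g u v) →
      (∑ u, g s u) - (∑ u, g u s) ≤ (∑ u, f s u) - (∑ u, f u s)) ∧
    (∀ B : Finset V, s ∈ B → t ∉ B →
      (∑ u ∈ Finset.univ.filter (· ∈ A), ∑ v ∈ Finset.univ.filter (· ∉ A), c u v)
        ≤ ∑ u ∈ B, ∑ v ∈ Bᶜ, c u v) := by
  classical
  have hsA : s ∈ A := by rw [hA]; exact Relation.ReflTransGen.refl
  have htA : t ∉ A := by rw [hA]; exact hnoaug
  set S : Finset V := Finset.univ.filter (· ∈ A) with hS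
  have hSc : Finset.univ.filter (· ∉ A) = Sᶜ := by
    ext v; simp [hS]
  have hsS : s ∈ S := by simp [hS, hsA]
  have htS : t ∉ S := by simp [hS, htA]
  -- cross edges are saturated, reverse cross edges carry no flow
  have hsat : ∀ u ∈ S, ∀ v ∈ Sᶜ, f u v = c u v ∧ f v u = 0 := by
    intro u hu v hv
    have huA : u ∈ A := by simpa [hS] using hu
    have hvA : v ∉ A := by
      simp only [Finset.mem_compl, hS, Finset.mem_filter] at hv
      simpa using hv
    have hcfle : cf u v ≤ 0 := by
      by_contra h
      push_neg at h
      apply hvA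
      rw [hA] at huA ⊢
      exact Relation.ReflTransGen.tail huA h
    rw [hcf u v] at hcfle
    have h1 := hcap u v
    have h2 := hcap v u
    constructor <;> linarith [h1.1, h1.2, h2.1, h2.2]
  -- value of f = capacity of cut A
  have hval : (∑ u, f s u) - (∑ u, f u s)
      = ∑ u ∈ S, ∑ v ∈ Sᶜ, c u v := by
    rw [flow_value_cut f s t hcons S hsS htS]
    have e1 : ∑ u ∈ S, ∑ v ∈ Sᶜ, f u v = ∑ u ∈ S, ∑ v ∈ Sᶜ, c u v :=
      Finset.sum_congr rfl fun u hu => Finset.sum_congr rfl fun v hv =>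
        (hsat u hu v hv).1
    have e2 : ∑ u ∈ Sᶜ, ∑ v ∈ S, f u v = 0 := by
      apply Finset.sum_eq_zero; intro u hu
      apply Finset.sum_eq_zero; intro v hv
      exact (hsat v hv u hu).2
    rw [e1, e2, sub_zero]
  refine ⟨hsA, htA, by rw [hSc]; exact hval, ?_, ?_⟩
  · intro g hgcap hgcons
    rw [flow_value_cut g s t hgcons S hsS htS, hval]
    have h1 : ∑ u ∈ S, ∑ v ∈ Sᶜ, g u v ≤ ∑ u ∈ S, ∑ v ∈ Sᶜ, c u v :=
      Finset.sum_le_sum fun u _ => Finset.sum_le_sum fun v _ => (hgcap u v).2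
    have h2 : 0 ≤ ∑ u ∈ Sᶜ, ∑ v ∈ S, g u v :=
      Finset.sum_nonneg fun u _ => Finset.sum_nonneg fun v _ => (hgcap u v).1
    linarith
  · intro B hsB htB
    rw [hSc, ← hval, flow_value_cut f s t hcons B hsB htB]
    have h1 : ∑ u ∈ B, ∑ v ∈ Bᶜ, f u v ≤ ∑ u ∈ B, ∑ v ∈ Bᶜ, c u v :=
      Finset.sum_le_sum fun u _ => Finset.sum_le_sum fun v _ => (hcap u v).2
    have h2 : 0 ≤ ∑ u ∈ Bᶜ, ∑ v ∈ B, f u v :=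
      Finset.sum_nonneg fun u _ => Finset.sum_nonneg fun v _ => (hcap u v).1
    linarith
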